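/- Let U = (−1,1) × (−1,1) and define x: U → ℝ³ by x(u₁,u₂) = (u₁, (2/5)u₂⁵ + u₂², u₁u₂²), and set δ(u₁,u₂) := u₂¹⁰ + 2u₂⁷ + u₂⁶ + u₂⁴ + 2u₂³ + u₁² + 1 (note δ = (u₂⁵+u₂²)² + (u₂³+1)² + u₁² > 0 on U). Then: (i) x is a proper frontal with Σ(x) = {(u₁,u₂) ∈ U : u₂ = 0}; indeed Dx = ΩΛᵀ with Ω having columns w₁ = (1, 0, u₂²), w₂ = (0, u₂³ + 1, u₁) and Λ = diag(1, 2u₂); (ii) on U∖Σ(x) the Gaussian curvature K = (eg−f²)/(EG−F²) of x equals −(u₂³+1)²/δ², i.e. −(u₂+1)²(u₂²−u₂+1)²/δ²; in particular the Gaussian curvature of x has a smooth nowhere-vanishing extension to all of U. -/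

import Mathlib

open Matrix Topology Filter

noncomputable section

/-- Vectors in ℝ³. -/
abbrev V3 : Type := Fin 3 → ℝ

/-- The Euclidean dot product on ℝ³. -/
def dot3 (v w : V3) : ℝ := v 0 * w 0 + v 1 * w 1 + v 2 * w 2

/-- The cross product on ℝ³. -/
def cross3 (v w : V3) : V3 :=
  ![v 1 * w 2 - v 2 * w 1, v 2 * w 0 - v 0 * w 2, v 0 * w 1 - v 1 * w 0]

/-- Partial derivative in the `u₁` direction. -/
def pd1 {E : Type*} [NormedAddCommGroup E] [NormedSpace ℝ E]
    (f : ℝ × ℝ → E) (q : ℝ × ℝ) : E := fderiv ℝ f q (1, 0)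

/-- Partial derivative in the `u₂` direction. -/
def pd2 {E : Type*} [NormedAddCommGroup E] [NormedSpace ℝ E]
    (f : ℝ × ℝ → E) (q : ℝ × ℝ) : E := fderiv ℝ f q (0, 1)

/-- The singular set `Σ(x)` of `x` on `U`. -/
def SingSet (x : ℝ × ℝ → V3) (U : Set (ℝ × ℝ)) : Set (ℝ × ℝ) :=
  {q ∈ U | ¬ LinearIndependent ℝ ![pd1 x q, pd2 x q]}

/-- `x` is a frontal on the open set `U`, with smooth unit normal field `n`. -/
def IsFrontal (x n : ℝ × ℝ → V3) (U : Set (ℝ × ℝ)) : Prop :=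
  IsOpen U ∧ ContDiffOn ℝ (⊤ : ℕ∞) x U ∧ ContDiffOn ℝ (⊤ : ℕ∞) n U ∧
  (∀ q ∈ U, dot3 (n q) (n q) = 1) ∧
  (∀ q ∈ U, dot3 (pd1 x q) (n q) = 0 ∧ dot3 (pd2 x q) (n q) = 0)

/-- `x` is proper: its singular set has empty interior. -/
def IsProper (x : ℝ × ℝ → V3) (U : Set (ℝ × ℝ)) : Prop :=
  interior (SingSet x U) = ∅

/-- `(w1 w2)` is a tangent moving basis of `x` on `U`. -/
def IsTMB (x w1 w2 : ℝ × ℝ → V3) (U : Set (ℝ × ℝ)) : Prop :=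
  ContDiffOn ℝ (⊤ : ℕ∞) w1 U ∧ ContDiffOn ℝ (⊤ : ℕ∞) w2 U ∧
  (∀ q ∈ U, LinearIndependent ℝ ![w1 q, w2 q]) ∧
  (∀ q ∈ U, pd1 x q ∈ Submodule.span ℝ {w1 q, w2 q} ∧
            pd2 x q ∈ Submodule.span ℝ {w1 q, w2 q})

/-- The unit normal induced by a tangent moving basis: `w₁ × w₂ / ‖w₁ × w₂‖`. -/
def inducedNormal (w1 w2 : ℝ × ℝ → V3) (q : ℝ × ℝ) : V3 :=
  (Real.sqrt (dot3 (cross3 (w1 q) (w2 q)) (cross3 (w1 q) (w2 q))))⁻¹ •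
    cross3 (w1 q) (w2 q)

/-- The matrix `I_Ω = Ωᵀ Ω`. -/
def IOmega (w1 w2 : ℝ × ℝ → V3) (q : ℝ × ℝ) : Matrix (Fin 2) (Fin 2) ℝ :=
  !![dot3 (w1 q) (w1 q), dot3 (w1 q) (w2 q);
     dot3 (w2 q) (w1 q), dot3 (w2 q) (w2 q)]

/-- The matrix `II_Ω`, with `(II_Ω)ᵢⱼ = ⟨(wᵢ)_{uⱼ}, n⟩` for the induced normal `n`. -/
def IIOmega (w1 w2 : ℝ × ℝ → V3) (q : ℝ × ℝ) : Matrix (Fin 2) (Fin 2) ℝ :=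
  !![dot3 (pd1 w1 q) (inducedNormal w1 w2 q), dot3 (pd2 w1 q) (inducedNormal w1 w2 q);
     dot3 (pd1 w2 q) (inducedNormal w1 w2 q), dot3 (pd2 w2 q) (inducedNormal w1 w2 q)]

/-- The Ω-relative curvature `K_Ω = det (−II_Ωᵀ I_Ω⁻¹)`. -/
def relK (w1 w2 : ℝ × ℝ → V3) (q : ℝ × ℝ) : ℝ :=
  (-(IIOmega w1 w2 q)ᵀ * (IOmega w1 w2 q)⁻¹).det

/-- The tangent plane at a regular point, `span{x_{u₁}, x_{u₂}}`. -/
def tangentSpan (x : ℝ × ℝ → V3) (q : ℝ × ℝ) : Submodule ℝ V3 :=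
  Submodule.span ℝ {pd1 x q, pd2 x q}

/-- The Gaussian curvature `K = (eg − f²)/(EG − F²)` w.r.t. the unit normal `n`. -/
def gaussK (x n : ℝ × ℝ → V3) (q : ℝ × ℝ) : ℝ :=
  (dot3 (pd1 (pd1 x) q) (n q) * dot3 (pd2 (pd2 x) q) (n q)
      - dot3 (pd2 (pd1 x) q) (n q) ^ 2) /
    (dot3 (pd1 x q) (pd1 x q) * dot3 (pd2 x q) (pd2 x q)
      - dot3 (pd1 x q) (pd2 x q) ^ 2)

/-- `ξ` is the usual Blaschke normal vector field of `x` on the (regular) set `R`: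
`⟨ξ, n⟩ = |K|^{1/4}`, its tangential part `W = ξ − ⟨ξ,n⟩n` is tangent, and `ξ` is
equiaffine (its partial derivatives are tangent), which encodes `II(W, X) = −X(|K|^{1/4})`. -/
def IsUsualBlaschkeOn (x n ξ : ℝ × ℝ → V3) (R : Set (ℝ × ℝ)) : Prop :=
  ∀ q ∈ R,
    dot3 (ξ q) (n q) = |gaussK x n q| ^ ((4 : ℝ)⁻¹) ∧
    (ξ q - dot3 (ξ q) (n q) • n q ∈ tangentSpan x q) ∧
    pd1 ξ q ∈ tangentSpan x q ∧ pd2 ξ q ∈ tangentSpan x q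

/-- `ξ` is the Blaschke vector field of the frontal `x`: a smooth extension to `U` of
the usual Blaschke vector field defined on the regular part `U ∖ Σ(x)`. -/
def IsBlaschkeField (x n ξ : ℝ × ℝ → V3) (U : Set (ℝ × ℝ)) : Prop :=
  ContDiffOn ℝ (⊤ : ℕ∞) ξ U ∧ IsUsualBlaschkeOn x n ξ (U \ SingSet x U)

/-- Entrywise partial derivative of a matrix-valued map, in the `u₁` direction. -/
def pdMat1 {m n : Type*} (M : ℝ × ℝ → Matrix m n ℝ) (q : ℝ × ℝ) : Matrix m n ℝ :=
  Matrix.of fun i j => pd1 (fun u => M u i j) q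

/-- Entrywise partial derivative of a matrix-valued map, in the `u₂` direction. -/
def pdMat2 {m n : Type*} (M : ℝ × ℝ → Matrix m n ℝ) (q : ℝ × ℝ) : Matrix m n ℝ :=
  Matrix.of fun i j => pd2 (fun u => M u i j) q

/-- The domain `U = (−1,1) × (−1,1)`. -/
def UEx : Set (ℝ × ℝ) := Set.Ioo (-1 : ℝ) 1 ×ˢ Set.Ioo (-1 : ℝ) 1

/-- The frontal of Example 5.2: `x = (u₁, (2/5)u₂⁵ + u₂², u₁u₂²)`. -/
def xEx (q : ℝ × ℝ) : V3 := ![q.1, (2 / 5) * q.2 ^ 5 + q.2 ^ 2, q.1 * q.2 ^ 2]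

/-- `δ = u₂¹⁰ + 2u₂⁷ + u₂⁶ + u₂⁴ + 2u₂³ + u₁² + 1`. -/
def δEx (q : ℝ × ℝ) : ℝ :=
  q.2 ^ 10 + 2 * q.2 ^ 7 + q.2 ^ 6 + q.2 ^ 4 + 2 * q.2 ^ 3 + q.1 ^ 2 + 1

/-- First column of the tmb: `w₁ = (1, 0, u₂²)`. -/
def w1Ex (q : ℝ × ℝ) : V3 := ![1, 0, q.2 ^ 2]

/-- Second column of the tmb: `w₂ = (0, u₂³ + 1, u₁)`. -/
def w2Ex (q : ℝ × ℝ) : V3 := ![0, q.2 ^ 3 + 1, q.1]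


/-! ### Auxiliary lemmas -/

lemma pow_snd (n : ℕ) (q : ℝ × ℝ) : HasFDerivAt (fun q : ℝ × ℝ => q.2 ^ n)
    ((n * q.2 ^ (n - 1)) • ContinuousLinearMap.snd ℝ ℝ ℝ) q :=
  (hasDerivAt_pow n q.2).comp_hasFDerivAt q hasFDerivAt_snd

lemma pd_vec3 {f : ℝ × ℝ → V3} {L : Fin 3 → ((ℝ × ℝ) →L[ℝ] ℝ)} (q : ℝ × ℝ)
    (h : ∀ i, HasFDerivAt (fun x => f x i) (L i) q) :
    pd1 f q = ![L 0 (1,0), L 1 (1,0), L 2 (1,0)] ∧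
    pd2 f q = ![L 0 (0,1), L 1 (0,1), L 2 (0,1)] := by
  have H : HasFDerivAt f (ContinuousLinearMap.pi L) q := hasFDerivAt_pi.2 h
  refine ⟨?_, ?_⟩ <;> [rw [pd1, H.fderiv]; rw [pd2, H.fderiv]] <;>
    funext i <;> fin_cases i <;> simp

/-- The cross product `w₁ × w₂` for the tmb of the example. -/
def cEx (q : ℝ × ℝ) : V3 := ![-(q.2 ^ 2 * (q.2 ^ 3 + 1)), -q.1, q.2 ^ 3 + 1]

lemma cross_w (q : ℝ × ℝ) : cross3 (w1Ex q) (w2Ex q) = cEx q := by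
  funext i; fin_cases i <;> simp [cross3, w1Ex, w2Ex, cEx] <;> ring

lemma dotc (q : ℝ × ℝ) : dot3 (cEx q) (cEx q) = δEx q := by
  simp [dot3, cEx, δEx]; ring

lemma nEx (q : ℝ × ℝ) :
    inducedNormal w1Ex w2Ex q = (Real.sqrt (δEx q))⁻¹ • cEx q := by
  rw [inducedNormal, cross_w, dotc]

lemma dot3_smul_right (v : V3) (s : ℝ) (w : V3) :
    dot3 v (s • w) = s * dot3 v w := by simp [dot3]; ring

lemma cube_pos {t : ℝ} (h : -1 < t) : 0 < t ^ 3 + 1 := by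
  nlinarith [sq_nonneg (2 * t - 1), sq_nonneg (t + 1), sq_nonneg t]

lemma delta_pos {q : ℝ × ℝ} (hq : q ∈ UEx) : 0 < δEx q := by
  obtain ⟨_, h2, _⟩ := hq
  have hc := cube_pos h2
  rw [δEx]
  nlinarith [sq_nonneg (q.2 ^ 5 + q.2 ^ 2), sq_nonneg q.1]

lemma pd1_xEx : pd1 xEx = w1Ex := by
  funext q
  have h := pd_vec3 (f := xEx)
    (L := ![ContinuousLinearMap.fst ℝ ℝ ℝ,
            (2/5 : ℝ) • (((5:ℕ) * q.2 ^ (5-1)) • ContinuousLinearMap.snd ℝ ℝ ℝ)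
              + ((2:ℕ) * q.2 ^ (2-1)) • ContinuousLinearMap.snd ℝ ℝ ℝ,
            q.1 • (((2:ℕ) * q.2 ^ (2-1)) • ContinuousLinearMap.snd ℝ ℝ ℝ)
              + q.2 ^ 2 • ContinuousLinearMap.fst ℝ ℝ ℝ]) q ?_
  · rw [h.1, w1Ex]; funext i; fin_cases i <;> norm_num [Matrix.cons_val_two, Matrix.tail_cons, Matrix.head_cons]
  · intro i
    fin_cases i <;> simp only [xEx, Matrix.cons_val_zero, Matrix.cons_val_one,
      Matrix.head_cons, Matrix.cons_val_two, Matrix.tail_cons, Fin.isValue]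
    · exact hasFDerivAt_fst
    · exact ((pow_snd 5 q).const_mul (2/5)).add (pow_snd 2 q)
    · exact hasFDerivAt_fst.mul (pow_snd 2 q)

lemma pd2_xEx : pd2 xEx = fun q => ![0, 2 * q.2 ^ 4 + 2 * q.2, 2 * (q.1 * q.2)] := by
  funext q
  have h := pd_vec3 (f := xEx)
    (L := ![ContinuousLinearMap.fst ℝ ℝ ℝ,
            (2/5 : ℝ) • (((5:ℕ) * q.2 ^ (5-1)) • ContinuousLinearMap.snd ℝ ℝ ℝ)
              + ((2:ℕ) * q.2 ^ (2-1)) • ContinuousLinearMap.snd ℝ ℝ ℝ,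
            q.1 • (((2:ℕ) * q.2 ^ (2-1)) • ContinuousLinearMap.snd ℝ ℝ ℝ)
              + q.2 ^ 2 • ContinuousLinearMap.fst ℝ ℝ ℝ]) q ?_
  · rw [h.2]; funext i; fin_cases i <;> norm_num [Matrix.cons_val_two, Matrix.tail_cons, Matrix.head_cons] <;> ring
  · intro i
    fin_cases i <;> simp only [xEx, Matrix.cons_val_zero, Matrix.cons_val_one,
      Matrix.head_cons, Matrix.cons_val_two, Matrix.tail_cons, Fin.isValue]
    · exact hasFDerivAt_fst
    · exact ((pow_snd 5 q).const_mul (2/5)).add (pow_snd 2 q)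
    · exact hasFDerivAt_fst.mul (pow_snd 2 q)

lemma pd_w1Ex (q : ℝ × ℝ) :
    pd1 w1Ex q = ![0, 0, 0] ∧ pd2 w1Ex q = ![0, 0, 2 * q.2] := by
  have h := pd_vec3 (f := w1Ex)
    (L := ![0, 0, ((2:ℕ) * q.2 ^ (2-1)) • ContinuousLinearMap.snd ℝ ℝ ℝ]) q ?_
  · refine ⟨?_, ?_⟩ <;> [rw [h.1]; rw [h.2]] <;> funext i <;> fin_cases i <;> norm_num [Matrix.cons_val_two, Matrix.tail_cons, Matrix.head_cons]
  · intro i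
    fin_cases i <;> simp only [w1Ex, Matrix.cons_val_zero, Matrix.cons_val_one,
      Matrix.head_cons, Matrix.cons_val_two, Matrix.tail_cons, Fin.isValue]
    · exact hasFDerivAt_const 1 q
    · exact hasFDerivAt_const 0 q
    · exact pow_snd 2 q

lemma pd2_pd2_xEx (q : ℝ × ℝ) :
    pd2 (pd2 xEx) q = ![0, 8 * q.2 ^ 3 + 2, 2 * q.1] := by
  rw [pd2_xEx]
  have h := pd_vec3 (f := fun q : ℝ × ℝ => ![0, 2 * q.2 ^ 4 + 2 * q.2, 2 * (q.1 * q.2)])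
    (L := ![0,
      (2:ℝ) • (((4:ℕ) * q.2 ^ (4-1)) • ContinuousLinearMap.snd ℝ ℝ ℝ)
        + (2:ℝ) • ContinuousLinearMap.snd ℝ ℝ ℝ,
      (2:ℝ) • (q.1 • ContinuousLinearMap.snd ℝ ℝ ℝ + q.2 • ContinuousLinearMap.fst ℝ ℝ ℝ)]) q ?_
  · rw [h.2]; funext i; fin_cases i <;> norm_num [Matrix.cons_val_two, Matrix.tail_cons, Matrix.head_cons] <;> ring
  · intro i
    fin_cases i <;> simp only [Matrix.cons_val_zero, Matrix.cons_val_one,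
      Matrix.head_cons, Matrix.cons_val_two, Matrix.tail_cons, Fin.isValue]
    · exact hasFDerivAt_const 0 q
    · exact (((pow_snd 4 q).const_mul 2)).add (hasFDerivAt_snd.const_mul 2)
    · exact (hasFDerivAt_fst.mul hasFDerivAt_snd).const_mul 2

lemma contDiff_vec3 {a b c : ℝ × ℝ → ℝ} (ha : ContDiff ℝ (⊤ : ℕ∞) a)
    (hb : ContDiff ℝ (⊤ : ℕ∞) b) (hc : ContDiff ℝ (⊤ : ℕ∞) c) :
    ContDiff ℝ (⊤ : ℕ∞) (fun q => (![a q, b q, c q] : V3)) := by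
  apply contDiff_pi.2
  intro i
  match i with
  | 0 => exact ha
  | 1 => exact hb
  | 2 => exact hc

lemma contDiff_xEx : ContDiff ℝ (⊤ : ℕ∞) xEx :=
  contDiff_vec3 (by fun_prop) (by fun_prop) (by fun_prop)

lemma contDiff_w1Ex : ContDiff ℝ (⊤ : ℕ∞) w1Ex :=
  contDiff_vec3 (by fun_prop) (by fun_prop) (by fun_prop)

lemma contDiff_w2Ex : ContDiff ℝ (⊤ : ℕ∞) w2Ex :=
  contDiff_vec3 (by fun_prop) (by fun_prop) (by fun_prop)

lemma contDiff_cEx : ContDiff ℝ (⊤ : ℕ∞) cEx :=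
  contDiff_vec3 (by fun_prop) (by fun_prop) (by fun_prop)

lemma contDiff_dEx : ContDiff ℝ (⊤ : ℕ∞) δEx := by unfold δEx; fun_prop


lemma dot3_smul_left (s : ℝ) (v w : V3) :
    dot3 (s • v) w = s * dot3 v w := by simp [dot3]; ring

lemma sing_eq : SingSet xEx UEx = {q ∈ UEx | q.2 = 0} := by
  ext q
  simp only [SingSet, Set.mem_setOf_eq]
  constructor
  · rintro ⟨hU, hni⟩
    refine ⟨hU, by_contra fun h2 => hni ?_⟩
    simp only [pd1_xEx, pd2_xEx]
    rw [linearIndependent_fin2]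
    constructor
    · intro h0
      have h1 : (2 : ℝ) * q.2 ^ 4 + 2 * q.2 = 0 := by
        have := congrFun h0 1; simpa using this
      have hc := cube_pos hU.2.1
      have hne : (2 : ℝ) * q.2 * (q.2 ^ 3 + 1) ≠ 0 :=
        mul_ne_zero (mul_ne_zero two_ne_zero h2) hc.ne'
      apply hne; linear_combination h1
    · intro a ha
      have := congrFun ha 0
      simp [w1Ex] at this
  · rintro ⟨hU, h2⟩
    refine ⟨hU, fun hli => ?_⟩
    have h0 : pd2 xEx q = 0 := by
      rw [pd2_xEx]; funext i; fin_cases i <;> simp [h2]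
    exact hli.ne_zero 1 (by simpa using h0)

lemma gauss_eq : ∀ q ∈ UEx \ SingSet xEx UEx,
    gaussK xEx (inducedNormal w1Ex w2Ex) q = -((q.2 ^ 3 + 1) ^ 2) / (δEx q) ^ 2 := by
  rintro q ⟨hU, hS⟩
  rw [sing_eq] at hS
  have h2 : q.2 ≠ 0 := fun h => hS ⟨hU, h⟩
  have hδ := delta_pos hU
  have hc := cube_pos hU.2.1
  set s := Real.sqrt (δEx q) with hs
  have hs2 : s ^ 2 = δEx q := Real.sq_sqrt hδ.le
  have hs0 : s ≠ 0 := (Real.sqrt_pos.2 hδ).ne'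
  have e0 : dot3 (pd1 (pd1 xEx) q) (inducedNormal w1Ex w2Ex q) = 0 := by
    rw [pd1_xEx, (pd_w1Ex q).1]; simp [dot3]
  have f0 : dot3 (pd2 (pd1 xEx) q) (inducedNormal w1Ex w2Ex q)
      = s⁻¹ * (2 * q.2 * (q.2 ^ 3 + 1)) := by
    rw [pd1_xEx, (pd_w1Ex q).2, nEx, dot3_smul_right]
    congr 1
    simp only [dot3, cEx, Matrix.cons_val_zero, Matrix.cons_val_one, Matrix.head_cons,
      Matrix.cons_val_two, Matrix.tail_cons]
    ring
  have g0 : dot3 (pd2 (pd2 xEx) q) (inducedNormal w1Ex w2Ex q)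
      = s⁻¹ * (-(6 * q.1 * q.2 ^ 3)) := by
    rw [pd2_pd2_xEx, nEx, dot3_smul_right]
    congr 1
    simp only [dot3, cEx, Matrix.cons_val_zero, Matrix.cons_val_one, Matrix.head_cons,
      Matrix.cons_val_two, Matrix.tail_cons]
    ring
  have E0 : dot3 (pd1 xEx q) (pd1 xEx q) = 1 + q.2 ^ 4 := by
    rw [pd1_xEx]
    simp only [dot3, w1Ex, Matrix.cons_val_zero, Matrix.cons_val_one, Matrix.head_cons,
      Matrix.cons_val_two, Matrix.tail_cons]
    ring
  have F0 : dot3 (pd1 xEx q) (pd2 xEx q) = 2 * q.1 * q.2 ^ 3 := by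
    rw [pd1_xEx, pd2_xEx]
    simp only [dot3, w1Ex, Matrix.cons_val_zero, Matrix.cons_val_one, Matrix.head_cons,
      Matrix.cons_val_two, Matrix.tail_cons]
    ring
  have G0 : dot3 (pd2 xEx q) (pd2 xEx q)
      = (2 * q.2 ^ 4 + 2 * q.2) ^ 2 + (2 * (q.1 * q.2)) ^ 2 := by
    rw [pd2_xEx]
    simp only [dot3, Matrix.cons_val_zero, Matrix.cons_val_one, Matrix.head_cons,
      Matrix.cons_val_two, Matrix.tail_cons]
    ring
  rw [gaussK, e0, f0, g0, E0, F0, G0]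
  have hD : (1 + q.2 ^ 4) * ((2 * q.2 ^ 4 + 2 * q.2) ^ 2 + (2 * (q.1 * q.2)) ^ 2)
      - (2 * q.1 * q.2 ^ 3) ^ 2 = 4 * q.2 ^ 2 * δEx q := by
    rw [δEx]; ring
  rw [hD, div_eq_div_iff (by positivity) (by positivity)]
  have hexp : (s⁻¹ * (2 * q.2 * (q.2 ^ 3 + 1))) ^ 2
      = (δEx q)⁻¹ * (2 * q.2 * (q.2 ^ 3 + 1)) ^ 2 := by
    rw [mul_pow, inv_pow, hs2]
  rw [hexp]
  field_simp
  ring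

/-- On `U = (−1,1)×(−1,1)`, the map `x = (u₁, (2/5)u₂⁵ + u₂², u₁u₂²)` is
a proper frontal with `Σ(x) = {u₂ = 0}` and `Dx = ΩΛᵀ` for `Λ = diag(1, 2u₂)`; on the
regular part its Gaussian curvature equals `−(u₂³+1)²/δ² = −(u₂+1)²(u₂²−u₂+1)²/δ²`,
and in particular it has a smooth nowhere-vanishing extension to all of `U`. -/
theorem statement19 :
    IsFrontal xEx (inducedNormal w1Ex w2Ex) UEx ∧ IsProper xEx UEx ∧
    SingSet xEx UEx = {q ∈ UEx | q.2 = 0} ∧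
    IsTMB xEx w1Ex w2Ex UEx ∧
    (∀ q ∈ UEx,
      pd1 xEx q = (1 : ℝ) • w1Ex q + (0 : ℝ) • w2Ex q ∧
      pd2 xEx q = (0 : ℝ) • w1Ex q + (2 * q.2) • w2Ex q) ∧
    (∀ q ∈ UEx, 0 < δEx q ∧
      δEx q = (q.2 ^ 5 + q.2 ^ 2) ^ 2 + (q.2 ^ 3 + 1) ^ 2 + q.1 ^ 2) ∧
    (∀ q ∈ UEx \ SingSet xEx UEx,
      gaussK xEx (inducedNormal w1Ex w2Ex) q = -((q.2 ^ 3 + 1) ^ 2) / (δEx q) ^ 2 ∧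
      gaussK xEx (inducedNormal w1Ex w2Ex) q
        = -((q.2 + 1) ^ 2 * (q.2 ^ 2 - q.2 + 1) ^ 2) / (δEx q) ^ 2) ∧
    (∃ Kext : ℝ × ℝ → ℝ,
      ContDiffOn ℝ (⊤ : ℕ∞) Kext UEx ∧ (∀ q ∈ UEx, Kext q ≠ 0) ∧
      ∀ q ∈ UEx \ SingSet xEx UEx,
        Kext q = gaussK xEx (inducedNormal w1Ex w2Ex) q) := by
  have hUopen : IsOpen UEx := isOpen_Ioo.prod isOpen_Ioo
  have hn : ContDiffOn ℝ (⊤ : ℕ∞) (inducedNormal w1Ex w2Ex) UEx := by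
    have h : ContDiffOn ℝ (⊤ : ℕ∞) (fun q => (Real.sqrt (δEx q))⁻¹ • cEx q) UEx := by
      apply ContDiffOn.smul (f := fun q => (Real.sqrt (δEx q))⁻¹) ?_ contDiff_cEx.contDiffOn
      intro q hq
      have hδ := delta_pos hq
      have h1 : ContDiffAt ℝ (⊤ : ℕ∞) (fun q : ℝ × ℝ => Real.sqrt (δEx q)) q :=
        (Real.contDiffAt_sqrt hδ.ne').comp q contDiff_dEx.contDiffAt
      exact (h1.inv (Real.sqrt_pos.2 hδ).ne').contDiffWithinAt
    exact h.congr fun q _ => nEx q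
  refine ⟨⟨hUopen, contDiff_xEx.contDiffOn, hn, ?_, ?_⟩, ?_, sing_eq, ?_, ?_, ?_, ?_, ?_⟩
  · -- unit normal
    intro q hq
    have hδ := delta_pos hq
    have hs2 : Real.sqrt (δEx q) ^ 2 = δEx q := Real.sq_sqrt hδ.le
    have hs0 : Real.sqrt (δEx q) ≠ 0 := (Real.sqrt_pos.2 hδ).ne'
    rw [nEx, dot3_smul_left, dot3_smul_right, dotc, ← mul_assoc]
    have h : (Real.sqrt (δEx q))⁻¹ * (Real.sqrt (δEx q))⁻¹ = (δEx q)⁻¹ := by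
      rw [← mul_inv, Real.mul_self_sqrt hδ.le]
    rw [h, inv_mul_cancel₀ hδ.ne']
  · -- orthogonality
    intro q hq
    constructor
    · rw [pd1_xEx, nEx, dot3_smul_right]
      have : dot3 (w1Ex q) (cEx q) = 0 := by
        simp only [dot3, w1Ex, cEx, Matrix.cons_val_zero, Matrix.cons_val_one,
          Matrix.head_cons, Matrix.cons_val_two, Matrix.tail_cons]
        ring
      rw [this, mul_zero]
    · rw [pd2_xEx, nEx, dot3_smul_right]
      have : dot3 (![0, 2 * q.2 ^ 4 + 2 * q.2, 2 * (q.1 * q.2)] : V3) (cEx q) = 0 := by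
        simp only [dot3, cEx, Matrix.cons_val_zero, Matrix.cons_val_one,
          Matrix.head_cons, Matrix.cons_val_two, Matrix.tail_cons]
        ring
      rw [this, mul_zero]
  · -- proper
    rw [IsProper, sing_eq, Set.eq_empty_iff_forall_notMem]
    intro q hq
    have h2 : q.2 = 0 := (interior_subset hq).2
    rw [mem_interior_iff_mem_nhds, Metric.mem_nhds_iff] at hq
    obtain ⟨ε, hε, hball⟩ := hq
    have hmem : ((q.1, q.2 + ε / 2) : ℝ × ℝ) ∈ Metric.ball q ε := by
      rw [Metric.mem_ball, Prod.dist_eq]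
      have h1 : dist (q.1, q.2 + ε / 2).1 q.1 = 0 := by simp
      have h2' : dist (q.1, q.2 + ε / 2).2 q.2 = ε / 2 := by
        simp only [Real.dist_eq]
        have h3 : q.2 + ε / 2 - q.2 = ε / 2 := by ring
        rw [h3, abs_of_pos (by linarith)]
      rw [h1, h2', max_eq_right (by linarith : (0:ℝ) ≤ ε / 2)]
      linarith
    have h3 := (hball hmem).2
    simp only at h3
    linarith
  · -- TMB
    refine ⟨contDiff_w1Ex.contDiffOn, contDiff_w2Ex.contDiffOn, ?_, ?_⟩
    · intro q hq
      rw [linearIndependent_fin2]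
      constructor
      · intro h0
        have := congrFun h0 1
        simp [w2Ex] at this
        have hc := cube_pos hq.2.1
        linarith
      · intro a ha
        have := congrFun ha 0
        simp [w1Ex, w2Ex] at this
    · intro q hq
      constructor
      · rw [pd1_xEx]
        exact Submodule.subset_span (Set.mem_insert _ _)
      · have h : pd2 xEx q = (2 * q.2) • w2Ex q := by
          rw [pd2_xEx]; funext i; fin_cases i <;> simp [w2Ex] <;> ring
        rw [h]
        exact Submodule.smul_mem _ _ (Submodule.subset_span (by simp))
  · -- Lambda decomposition
    intro q hq
    constructor
    · rw [pd1_xEx]; simp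
    · rw [pd2_xEx]; funext i; fin_cases i <;> simp [w1Ex, w2Ex] <;> ring
  · -- delta positivity and identity
    intro q hq
    exact ⟨delta_pos hq, by rw [δEx]; ring⟩
  · -- curvature formulas
    intro q hq
    refine ⟨gauss_eq q hq, ?_⟩
    rw [gauss_eq q hq]
    have hnum : -((q.2 ^ 3 + 1) ^ 2) = -((q.2 + 1) ^ 2 * (q.2 ^ 2 - q.2 + 1) ^ 2) := by ring
    rw [hnum]
  · -- smooth extension
    refine ⟨fun q => -((q.2 ^ 3 + 1) ^ 2) / (δEx q) ^ 2, ?_, ?_, ?_⟩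
    · apply ContDiffOn.div
      · exact (show ContDiff ℝ (⊤ : ℕ∞) fun q : ℝ × ℝ => -((q.2 ^ 3 + 1) ^ 2) by fun_prop).contDiffOn
      · exact ((contDiff_dEx).pow 2).contDiffOn
      · exact fun q hq => pow_ne_zero 2 (delta_pos hq).ne'
    · intro q hq
      have hδ := delta_pos hq
      have hc := cube_pos hq.2.1
      have : -((q.2 ^ 3 + 1) ^ 2) / (δEx q) ^ 2 < 0 :=
        div_neg_of_neg_of_pos (by nlinarith) (by positivity)
      exact this.ne
    · intro q hq
      exact (gauss_eq q hq).symm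

end
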